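/- arXiv:2201.08009 — 7 statements merged into one kernel-verified Lean document; each statement's English description precedes it below -/
import Mathlib

section
/- Let M be a unital C*-algebra and let A, B be C*-subalgebras of M containing the unit of M. Let Φ_B : M → B be a conditional expectation and let τ be a tracial state on B; for b ∈ B write ‖b‖₂ := τ(b* b)^{1/2}. If there exists a sequence of unitaries w_n ∈ A such that ‖Φ_B(x w_n y)‖₂ → 0 as n → ∞ for all x, y ∈ M, then there is no unitary v ∈ M such that v A v* ⊆ B. -/
open Filter ComplexOrder

/-- Let `M` be a unital C*-algebra, `A, B` C*-subalgebras containing the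
unit, `Φ : M → B` a conditional expectation, `τ` a tracial state on `B`, with
`‖b‖₂ = τ(b* b)^{1/2}`.  If there is a sequence of unitaries `w n ∈ A` with
`‖Φ (x * w n * y)‖₂ → 0` for all `x y : M`, then no unitary `v ∈ M` satisfies
`v A v* ⊆ B`. -/
theorem stmt0
    {M : Type*} [NormedRing M] [StarRing M] [CStarRing M] [CompleteSpace M]
    [NormedAlgebra ℂ M] [StarModule ℂ M] [PartialOrder M] [StarOrderedRing M]
    (A B : StarSubalgebra ℂ M)
    -- `Φ` is a conditional expectation of `M` onto `B`:
    (Φ : M →ₗ[ℂ] M)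
    (hΦmem : ∀ x : M, Φ x ∈ B)
    (hΦid : ∀ b ∈ B, Φ b = b)
    (hΦbimod : ∀ b₁ ∈ B, ∀ b₂ ∈ B, ∀ x : M, Φ (b₁ * x * b₂) = b₁ * Φ x * b₂)
    (hΦpos : ∀ x : M, 0 ≤ x → 0 ≤ Φ x)
    -- `τ` is a tracial state on `B`:
    (τ : M →ₗ[ℂ] ℂ)
    (hτ1 : τ 1 = 1)
    (hτtr : ∀ b₁ ∈ B, ∀ b₂ ∈ B, τ (b₁ * b₂) = τ (b₂ * b₁))
    (hτpos : ∀ b ∈ B, 0 ≤ b → 0 ≤ τ b)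
    -- a sequence of unitaries in `A`:
    (w : ℕ → M) (hwA : ∀ n, w n ∈ A)
    (hwu : ∀ n, star (w n) * w n = 1 ∧ w n * star (w n) = 1)
    -- `‖Φ (x * w n * y)‖₂ → 0` for all `x, y ∈ M`:
    (hlim : ∀ x y : M,
      Tendsto (fun n => Real.sqrt ((τ (star (Φ (x * w n * y)) * Φ (x * w n * y))).re))
        atTop (nhds 0)) :
    ¬ ∃ v : M, (star v * v = 1 ∧ v * star v = 1) ∧ (∀ a ∈ A, v * a * star v ∈ B) := by
  rintro ⟨v, ⟨hv1, hv2⟩, hvB⟩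
  have key : ∀ n, Real.sqrt ((τ (star (Φ (v * w n * star v)) * Φ (v * w n * star v))).re) = 1 := by
    intro n
    have hmem : v * w n * star v ∈ B := hvB _ (hwA n)
    rw [hΦid _ hmem]
    have : star (v * w n * star v) * (v * w n * star v) = 1 := by
      calc star (v * w n * star v) * (v * w n * star v)
          = v * (star (w n) * ((star v * v) * (w n * star v))) := by
            simp [mul_assoc]
        _ = 1 := by rw [hv1, one_mul, ← mul_assoc (star (w n)), (hwu n).1, one_mul, hv2]
    rw [this, hτ1]
    simp
  have h := hlim v (star v)
  simp only [key] at h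
  exact one_ne_zero (tendsto_nhds_unique h tendsto_const_nhds).symm
end

section
/- Let E be a finite directed multigraph with adjacency matrix A, assume A is irreducible, and let (β, x) be a Perron–Frobenius pair for A. Fix vertices w₁, w₂ with A(w₁,w₂) ≥ 2. For a vertex v and integers k ≥ 1 and 0 ≤ i ≤ k, let M_{k,v}^i denote the set of paths μ = (μ₁,...,μ_k) of length k with r(μ_k) = v such that exactly i of the edges μ_j satisfy s(μ_j) = w₁ and r(μ_j) = w₂. Then for every fixed vertex v and every fixed integer i ≥ 0, |M_{k,v}^i| / β^k → 0 as k → ∞. -/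
/-!
Give every edge from `w₁` to `w₂` the weight `1/2` and every other edge the weight `1`, and let
`W` be the weighted adjacency matrix. A path in `M_{k,v}^i` has weight `2^(-i)`, so
`|M_{k,v}^i| ≤ 2^i ∑_u (W^k)(u, v)`. Now `W ≤ A` entrywise, so `W x ≤ β x`, with strict inequality
at `w₁`. By irreducibility every vertex reaches `w₁`, so the defect propagates: some power satisfies
`W^m x ≤ γ β^m x` with `γ < 1`, whence `W^k / β^k → 0`.
-/

open Filter Finset Matrix Topology

namespace Matrix

variable {n : Type*} [Fintype n]

lemma mulVec_mono_of_nonneg {C : Matrix n n ℝ} (hC : ∀ i j, 0 ≤ C i j) {y z : n → ℝ}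
    (h : y ≤ z) : C *ᵥ y ≤ C *ᵥ z := fun i =>
  sum_le_sum fun j _ => mul_le_mul_of_nonneg_left (h j) (hC i j)

variable [DecidableEq n]

lemma pow_apply_le_pow_apply {P Q : Matrix n n ℝ} (hP : ∀ i j, 0 ≤ P i j)
    (hPQ : ∀ i j, P i j ≤ Q i j) (k : ℕ) (i j : n) : (P ^ k) i j ≤ (Q ^ k) i j := by
  induction k generalizing j with
  | zero => rfl
  | succ k ih =>
    rw [pow_succ, pow_succ, mul_apply, mul_apply]
    exact sum_le_sum fun l _ =>
      mul_le_mul (ih l) (hPQ l j) (hP l j)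
        (pow_apply_nonneg (fun a b => (hP a b).trans (hPQ a b)) k i l)

section Subinvariant

variable {C : Matrix n n ℝ} {x : n → ℝ}

lemma pow_mulVec_le (hC : ∀ i j, 0 ≤ C i j) (hCx : C *ᵥ x ≤ x) (k : ℕ) : (C ^ k) *ᵥ x ≤ x := by
  induction k with
  | zero => rw [pow_zero, one_mulVec]
  | succ k ih =>
    rw [pow_succ, ← mulVec_mulVec]
    exact (mulVec_mono_of_nonneg (pow_apply_nonneg hC k) hCx).trans ih

lemma sub_pow_mulVec_eq_sum (k : ℕ) :
    x - (C ^ k) *ᵥ x = ∑ j ∈ range k, (C ^ j) *ᵥ (x - C *ᵥ x) := by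
  simp_rw [mulVec_sub, mulVec_mulVec, ← pow_succ]
  rw [sum_range_sub' (fun j => (C ^ j) *ᵥ x), pow_zero, one_mulVec]

lemma exists_pow_mulVec_lt (hC : ∀ i j, 0 ≤ C i j) (hCx : C *ᵥ x ≤ x) {w : n}
    (hw : (C *ᵥ x) w < x w) (hreach : ∀ u, ∃ k, 0 < (C ^ k) u w) :
    ∃ m, 0 < m ∧ ∀ u, ((C ^ m) *ᵥ x) u < x u := by
  -- `x - C ^ m *ᵥ x = ∑ j < m, C ^ j *ᵥ (x - C *ᵥ x)` is a sum of nonnegative vectors, and the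
  -- term `j = c u` is already positive at `u`.
  choose c hc using hreach
  refine ⟨univ.sup c + 1, Nat.succ_pos _, fun u => sub_pos.mp ?_⟩
  have hd : 0 ≤ x - C *ᵥ x := sub_nonneg.mpr hCx
  have hterm : ∀ j, 0 ≤ (C ^ j) *ᵥ (x - C *ᵥ x) := fun j =>
    by simpa using mulVec_mono_of_nonneg (pow_apply_nonneg hC j) hd
  calc 0 < (C ^ c u) u w * (x - C *ᵥ x) w := mul_pos (hc u) (sub_pos.mpr hw)
    _ ≤ ((C ^ c u) *ᵥ (x - C *ᵥ x)) u :=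
      single_le_sum (f := fun l => (C ^ c u) u l * (x - C *ᵥ x) l)
        (fun l _ => mul_nonneg (pow_apply_nonneg hC _ u l) (hd l)) (mem_univ w)
    _ ≤ ∑ j ∈ range (univ.sup c + 1), ((C ^ j) *ᵥ (x - C *ᵥ x)) u :=
      single_le_sum (f := fun j => ((C ^ j) *ᵥ (x - C *ᵥ x)) u) (fun j _ => hterm j u)
        (mem_range.mpr (Nat.lt_succ_of_le (le_sup (mem_univ u))))
    _ = (x - (C ^ (univ.sup c + 1)) *ᵥ x) u := by
      rw [sub_pow_mulVec_eq_sum, Finset.sum_apply]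

lemma exists_pow_mulVec_le_smul (hC : ∀ i j, 0 ≤ C i j) (hx : ∀ i, 0 < x i)
    (hCx : C *ᵥ x ≤ x) {w : n} (hw : (C *ᵥ x) w < x w) (hreach : ∀ u, ∃ k, 0 < (C ^ k) u w) :
    ∃ m, 0 < m ∧ ∃ γ : ℝ, 0 ≤ γ ∧ γ < 1 ∧ (C ^ m) *ᵥ x ≤ γ • x := by
  obtain ⟨m, hm, hlt⟩ := exists_pow_mulVec_lt hC hCx hw hreach
  have : Nonempty n := ⟨w⟩
  obtain ⟨u₀, hu₀⟩ := Finite.exists_max fun u => ((C ^ m) *ᵥ x) u / x u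
  refine ⟨m, hm, ((C ^ m) *ᵥ x) u₀ / x u₀, div_nonneg ?_ (hx u₀).le,
    (div_lt_one (hx u₀)).mpr (hlt u₀), fun u => ?_⟩
  · exact sum_nonneg fun l _ => mul_nonneg (pow_apply_nonneg hC m u₀ l) (hx l).le
  · rw [Pi.smul_apply, smul_eq_mul, ← div_le_iff₀ (hx u)]
    exact hu₀ u

lemma pow_mulVec_le_pow_div_smul (hC : ∀ i j, 0 ≤ C i j) (hCx : C *ᵥ x ≤ x) {m : ℕ} {γ : ℝ}
    (hγ : 0 ≤ γ) (hm : (C ^ m) *ᵥ x ≤ γ • x) (k : ℕ) : (C ^ k) *ᵥ x ≤ γ ^ (k / m) • x := by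
  have hmul : ∀ q, (C ^ (m * q)) *ᵥ x ≤ γ ^ q • x := by
    intro q
    induction q with
    | zero => simp
    | succ q ih =>
      calc (C ^ (m * (q + 1))) *ᵥ x = (C ^ (m * q)) *ᵥ ((C ^ m) *ᵥ x) := by
            rw [mulVec_mulVec, ← pow_add, mul_add_one]
        _ ≤ (C ^ (m * q)) *ᵥ (γ • x) := mulVec_mono_of_nonneg (pow_apply_nonneg hC _) hm
        _ = γ • (C ^ (m * q)) *ᵥ x := by rw [mulVec_smul]
        _ ≤ γ • γ ^ q • x := smul_le_smul_of_nonneg_left ih hγ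
        _ = γ ^ (q + 1) • x := by rw [smul_smul, pow_succ']
  calc (C ^ k) *ᵥ x = (C ^ (m * (k / m))) *ᵥ ((C ^ (k % m)) *ᵥ x) := by
        rw [mulVec_mulVec, ← pow_add, Nat.div_add_mod]
    _ ≤ (C ^ (m * (k / m))) *ᵥ x :=
        mulVec_mono_of_nonneg (pow_apply_nonneg hC _) (pow_mulVec_le hC hCx _)
    _ ≤ γ ^ (k / m) • x := hmul _

theorem tendsto_pow_apply_nhds_zero (hC : ∀ i j, 0 ≤ C i j) (hx : ∀ i, 0 < x i)
    (hCx : C *ᵥ x ≤ x) {w : n} (hw : (C *ᵥ x) w < x w) (hreach : ∀ u, ∃ k, 0 < (C ^ k) u w)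
    (u v : n) : Tendsto (fun k => (C ^ k) u v) atTop (𝓝 0) := by
  obtain ⟨m, hm, γ, hγ0, hγ1, hγ⟩ := exists_pow_mulVec_le_smul hC hx hCx hw hreach
  have hbound : ∀ k, (C ^ k) u v ≤ γ ^ (k / m) * (x u / x v) := fun k => by
    rw [mul_div_assoc', le_div_iff₀ (hx v)]
    calc (C ^ k) u v * x v ≤ ((C ^ k) *ᵥ x) u :=
          single_le_sum (f := fun l => (C ^ k) u l * x l)
            (fun l _ => mul_nonneg (pow_apply_nonneg hC k u l) (hx l).le) (mem_univ v)
      _ ≤ γ ^ (k / m) * x u := pow_mulVec_le_pow_div_smul hC hCx hγ0 hγ k u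
  have hγpow : Tendsto (fun k => γ ^ (k / m) * (x u / x v)) atTop (𝓝 0) := by
    simpa using ((tendsto_pow_atTop_nhds_zero_of_lt_one hγ0 hγ1).comp
      (Nat.tendsto_div_const_atTop hm.ne')).mul_const (x u / x v)
  exact squeeze_zero (pow_apply_nonneg hC · u v) hbound hγpow

end Subinvariant

theorem tendsto_pow_apply_div_pow_nhds_zero_of_lt {A W : Matrix n n ℝ} {β c : ℝ} {x : n → ℝ}
    {w₁ w₂ : n} (hβ : 0 < β) (hx : ∀ i, 0 < x i) (hAx : A *ᵥ x = β • x) (hc : 0 < c)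
    (hW : ∀ i j, 0 ≤ W i j) (hcAW : ∀ i j, c * A i j ≤ W i j) (hWA : ∀ i j, W i j ≤ A i j)
    (hlt : W w₁ w₂ < A w₁ w₂) (hirr : ∀ u, ∃ k, 0 < (A ^ k) u w₁) (u v : n) :
    Tendsto (fun k => (W ^ k) u v / β ^ k) atTop (𝓝 0) := by
  have hC : ∀ i j, 0 ≤ (β⁻¹ • W) i j := fun i j => mul_nonneg (inv_nonneg.2 hβ.le) (hW i j)
  have hWx : W *ᵥ x ≤ β • x := hAx ▸ fun i =>
    sum_le_sum fun j _ => mul_le_mul_of_nonneg_right (hWA i j) (hx j).le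
  have hWx₁ : (W *ᵥ x) w₁ < β * x w₁ := by
    rw [← smul_eq_mul, ← Pi.smul_apply, ← hAx]
    exact sum_lt_sum (fun j _ => mul_le_mul_of_nonneg_right (hWA w₁ j) (hx j).le)
      ⟨w₂, mem_univ _, mul_lt_mul_of_pos_right hlt (hx w₂)⟩
  have hCx : (β⁻¹ • W) *ᵥ x ≤ x := fun i => by
    rw [smul_mulVec, Pi.smul_apply, smul_eq_mul, inv_mul_le_iff₀ hβ]
    exact hWx i
  have hCx₁ : ((β⁻¹ • W) *ᵥ x) w₁ < x w₁ := by
    rwa [smul_mulVec, Pi.smul_apply, smul_eq_mul, inv_mul_lt_iff₀ hβ]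
  have hreach : ∀ u, ∃ k, 0 < ((β⁻¹ • W) ^ k) u w₁ := fun u => by
    obtain ⟨k, hk⟩ := hirr u
    refine ⟨k, lt_of_lt_of_le ?_ (pow_apply_le_pow_apply (P := (β⁻¹ * c) • A) ?_ ?_ k u w₁)⟩
    · rw [smul_pow, smul_apply, smul_eq_mul]
      exact mul_pos (pow_pos (mul_pos (inv_pos.2 hβ) hc) k) hk
    · exact fun i j => mul_nonneg (mul_pos (inv_pos.2 hβ) hc).le ((hW i j).trans (hWA i j))
    · exact fun i j => by
        rw [smul_apply, smul_eq_mul, smul_apply, smul_eq_mul, mul_assoc]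
        exact mul_le_mul_of_nonneg_left (hcAW i j) (inv_pos.2 hβ).le
  simpa [smul_pow, div_eq_inv_mul] using
    tendsto_pow_apply_nhds_zero hC hx hCx hCx₁ hreach u v

end Matrix

section Paths

variable {V Edge : Type*} (s r : Edge → V)

def IsPath {k : ℕ} (μ : Fin k → Edge) : Prop :=
  ∀ (j : ℕ) (h : j + 1 < k), r (μ ⟨j, Nat.lt_of_succ_lt h⟩) = s (μ ⟨j + 1, h⟩)

-- Vacuous for the empty path, which therefore ends at every vertex (matching `W ^ 0 = 1`).
def EndsAt {k : ℕ} (v : V) (μ : Fin k → Edge) : Prop :=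
  ∀ j : Fin k, j.val = k - 1 → r (μ j) = v

lemma isPath_snoc_iff {k : ℕ} (μ : Fin k → Edge) (e : Edge) :
    IsPath s r (Fin.snoc μ e : Fin (k + 1) → Edge) ↔ IsPath s r μ ∧ EndsAt r (s e) μ := by
  simp only [IsPath, EndsAt, Fin.snoc]
  constructor
  · intro H
    refine ⟨fun j h => by simpa [h, Nat.lt_of_succ_lt h] using H j (by omega), fun j hj => ?_⟩
    obtain ⟨j, hjk⟩ := j
    obtain rfl : j = k - 1 := hj
    simpa [hjk, Nat.sub_add_cancel (Nat.one_le_of_lt hjk)] using H (k - 1) (by omega)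
  · rintro ⟨H, H'⟩ j h
    rcases Nat.lt_or_ge (j + 1) k with hj | hj
    · simpa [hj, Nat.lt_of_succ_lt hj] using H j hj
    · simpa [show j < k by omega, show ¬ j + 1 < k by omega] using
        H' ⟨j, by omega⟩ (show j = k - 1 by omega)

lemma endsAt_snoc_iff {k : ℕ} (μ : Fin k → Edge) (e : Edge) (v : V) :
    EndsAt r v (Fin.snoc μ e : Fin (k + 1) → Edge) ↔ r e = v := by
  simp only [EndsAt]
  refine ⟨fun H => by simpa using H (Fin.last k) (by simp), fun H j hj => ?_⟩
  obtain rfl : j = Fin.last k := Fin.ext (by simpa using hj)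
  simpa using H

variable [DecidableEq V] [Fintype Edge]

def weightMatrix (wt : Edge → ℝ) : Matrix V V ℝ :=
  of fun u w => ∑ e with s e = u ∧ r e = w, wt e

lemma sum_mul_weightMatrix_apply [Fintype V] (wt : Edge → ℝ) (f : V → ℝ) (v : V) :
    ∑ u, f u * weightMatrix s r wt u v = ∑ e with r e = v, f (s e) * wt e := by
  simp only [weightMatrix, of_apply, mul_sum, sum_filter]
  rw [sum_comm]
  refine sum_congr rfl fun e _ => ?_
  by_cases he : r e = v <;> simp [he]

open scoped Classical in
theorem sum_prod_weight_paths [Fintype V] (wt : Edge → ℝ) (k : ℕ) (v : V) :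
    ∑ μ : Fin k → Edge with IsPath s r μ ∧ EndsAt r v μ, ∏ j, wt (μ j) =
      ∑ u, (weightMatrix s r wt ^ k) u v := by
  induction k generalizing v with
  | zero => simp [IsPath, EndsAt, one_apply]
  | succ k ih =>
    have hsnoc : ∀ (e : Edge) (μ : Fin k → Edge),
        (if IsPath s r (Fin.snoc μ e : Fin (k + 1) → Edge) ∧
          EndsAt r v (Fin.snoc μ e : Fin (k + 1) → Edge)
          then ∏ j, wt ((Fin.snoc μ e : Fin (k + 1) → Edge) j) else 0) =
        if (IsPath s r μ ∧ EndsAt r (s e) μ) ∧ r e = v then (∏ j, wt (μ j)) * wt e else 0 := by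
      intro e μ
      simp only [isPath_snoc_iff, endsAt_snoc_iff, Fin.prod_univ_castSucc, Fin.snoc_castSucc,
        Fin.snoc_last]
    calc ∑ μ : Fin (k + 1) → Edge with IsPath s r μ ∧ EndsAt r v μ, ∏ j, wt (μ j)
        = ∑ e with r e = v, (∑ μ : Fin k → Edge with IsPath s r μ ∧ EndsAt r (s e) μ,
            ∏ j, wt (μ j)) * wt e := by
          rw [sum_filter, ← Fintype.sum_equiv (Fin.snocEquiv fun _ => Edge) _ _
            fun p => (hsnoc p.1 p.2).symm, Fintype.sum_prod_type, sum_filter]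
          refine sum_congr rfl fun e _ => ?_
          by_cases he : r e = v <;> simp [he, sum_filter, sum_mul, ite_mul]
      _ = ∑ u, (weightMatrix s r wt ^ (k + 1)) u v := by
          rw [pow_succ]
          simp only [mul_apply]
          rw [sum_comm]
          simp_rw [← sum_mul]
          rw [sum_mul_weightMatrix_apply]
          simp_rw [ih]

lemma weightMatrix_one_apply (u w : V) :
    weightMatrix s r 1 u w = Nat.card {e : Edge // s e = u ∧ r e = w} := by
  simp [weightMatrix, Nat.card_eq_fintype_card, Fintype.card_subtype]

lemma weightMatrix_apply_mono {wt wt' : Edge → ℝ} (h : ∀ e, wt e ≤ wt' e) (u w : V) :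
    weightMatrix s r wt u w ≤ weightMatrix s r wt' u w :=
  sum_le_sum fun e _ => h e

lemma weightMatrix_const_apply (c : ℝ) (u w : V) :
    weightMatrix s r (fun _ => c) u w = c * weightMatrix s r 1 u w := by
  simp [weightMatrix, mul_comm]

end Paths

section HalfWeight

variable {V Edge : Type*} (s r : Edge → V) [DecidableEq V] (w₁ w₂ : V)

noncomputable def halfWeight (e : Edge) : ℝ := if s e = w₁ ∧ r e = w₂ then 1 / 2 else 1

lemma halfWeight_nonneg (e : Edge) : 0 ≤ halfWeight s r w₁ w₂ e := by
  unfold halfWeight; split_ifs <;> norm_num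

lemma halfWeight_le_one (e : Edge) : halfWeight s r w₁ w₂ e ≤ 1 := by
  unfold halfWeight; split_ifs <;> norm_num

lemma half_le_halfWeight (e : Edge) : 1 / 2 ≤ halfWeight s r w₁ w₂ e := by
  unfold halfWeight; split_ifs <;> norm_num

lemma prod_halfWeight {k : ℕ} (μ : Fin k → Edge) :
    ∏ j, halfWeight s r w₁ w₂ (μ j) =
      (1 / 2) ^ Nat.card {j : Fin k // s (μ j) = w₁ ∧ r (μ j) = w₂} := by
  rw [Nat.card_eq_fintype_card, Fintype.card_subtype]
  simp only [halfWeight]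
  rw [prod_ite, prod_const, prod_const_one, mul_one]

variable [Fintype Edge]

lemma weightMatrix_halfWeight_lt (h : 0 < weightMatrix s r 1 w₁ w₂) :
    weightMatrix s r (halfWeight s r w₁ w₂) w₁ w₂ < weightMatrix s r 1 w₁ w₂ := by
  refine sum_lt_sum_of_nonempty (nonempty_of_sum_ne_zero h.ne') fun e he => ?_
  rw [halfWeight, if_pos (mem_filter.mp he).2]
  norm_num

lemma card_paths_le_two_pow_mul_sum_weightMatrix_pow [Fintype V] (k : ℕ) (v : V) (i : ℕ) :
    (Nat.card {μ : Fin k → Edge // IsPath s r μ ∧ EndsAt r v μ ∧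
        Nat.card {j : Fin k // s (μ j) = w₁ ∧ r (μ j) = w₂} = i} : ℝ) ≤
      2 ^ i * ∑ u, (weightMatrix s r (halfWeight s r w₁ w₂) ^ k) u v := by
  classical
  rw [← sum_prod_weight_paths, ← div_le_iff₀' (by positivity), div_eq_mul_one_div,
    ← _root_.one_div_pow, Nat.card_eq_fintype_card, Fintype.card_subtype, ← nsmul_eq_mul,
    ← sum_const]
  calc _ = ∑ μ : Fin k → Edge with IsPath s r μ ∧ EndsAt r v μ ∧
        Nat.card {j : Fin k // s (μ j) = w₁ ∧ r (μ j) = w₂} = i,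
          ∏ j, halfWeight s r w₁ w₂ (μ j) :=
        sum_congr rfl fun μ hμ => by rw [prod_halfWeight, (mem_filter.mp hμ).2.2.2]
    _ ≤ _ := sum_le_sum_of_subset_of_nonneg
        (fun μ => by simpa only [mem_filter] using fun h => ⟨h.1, h.2.1, h.2.2.1⟩)
        fun μ _ _ => prod_nonneg fun j _ => halfWeight_nonneg s r w₁ w₂ (μ j)

end HalfWeight

/-- Let `E` be a finite directed multigraph with irreducible adjacency
matrix `A` and Perron–Frobenius pair `(β, x)`.  Fix vertices `w₁, w₂` with `A w₁ w₂ ≥ 2`.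
For a vertex `v`, `M_{k,v}^i` is the set of paths `μ` of length `k` ending at `v` in which
exactly `i` of the edges go from `w₁` to `w₂`.  Then for every fixed `v` and `i`,
`|M_{k,v}^i| / β ^ k → 0` as `k → ∞`. -/
theorem stmt1
    (V Edge : Type) [Fintype V] [DecidableEq V] [Fintype Edge]
    (s r : Edge → V)
    -- the adjacency matrix of the graph:
    (A : Matrix V V ℝ)
    (hA : ∀ v w, A v w = Nat.card {e : Edge // s e = v ∧ r e = w})
    -- `A` is irreducible:
    (hirr : ∀ v w : V, ∃ k : ℕ, 0 < k ∧ 0 < (A ^ k) v w)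
    -- `(β, x)` is a Perron–Frobenius pair for `A`:
    (β : ℝ) (x : V → ℝ) (hβ : 0 < β) (hx : ∀ v, 0 < x v)
    (hPF : ∀ v, ∑ w, A v w * x w = β * x v)
    (w₁ w₂ : V) (h2 : (2 : ℝ) ≤ A w₁ w₂)
    (v : V) (i : ℕ) :
    Tendsto
      (fun k : ℕ =>
        (Nat.card {μ : Fin k → Edge //
            -- `μ` is a path:
            (∀ (j : ℕ) (h : j + 1 < k), r (μ ⟨j, Nat.lt_of_succ_lt h⟩) = s (μ ⟨j + 1, h⟩)) ∧
            -- `μ` ends at `v`: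
            (∀ j : Fin k, j.val = k - 1 → r (μ j) = v) ∧
            -- exactly `i` of the edges of `μ` go from `w₁` to `w₂`:
            Nat.card {j : Fin k // s (μ j) = w₁ ∧ r (μ j) = w₂} = i} : ℝ) / β ^ k)
      atTop (nhds 0) := by
  obtain rfl : A = weightMatrix s r 1 := ext fun u w => by rw [hA, weightMatrix_one_apply]
  set W := weightMatrix s r (halfWeight s r w₁ w₂)
  have hW : ∀ u w, 0 ≤ W u w := fun u w =>
    sum_nonneg fun e _ => halfWeight_nonneg s r w₁ w₂ e
  have hWA : ∀ u w, W u w ≤ weightMatrix s r 1 u w :=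
    weightMatrix_apply_mono s r (halfWeight_le_one s r w₁ w₂)
  have hAW : ∀ u w, 1 / 2 * weightMatrix s r 1 u w ≤ W u w := fun u w =>
    (weightMatrix_const_apply s r _ u w).symm.trans_le
      (weightMatrix_apply_mono s r (half_le_halfWeight s r w₁ w₂) u w)
  have hlt : W w₁ w₂ < weightMatrix s r 1 w₁ w₂ :=
    weightMatrix_halfWeight_lt s r w₁ w₂ (by linarith)
  have hlim := tendsto_pow_apply_div_pow_nhds_zero_of_lt hβ hx (funext hPF) one_half_pos hW hAW
    hWA hlt fun u => (hirr u w₁).imp fun _ => And.right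
  refine squeeze_zero (fun k => by positivity) (fun k => ?_)
    (by simpa using (tendsto_finsetSum univ fun u _ => hlim u v).const_mul (2 ^ i))
  rw [← sum_div, mul_div_assoc']
  exact div_le_div_of_nonneg_right
    (card_paths_le_two_pow_mul_sum_weightMatrix_pow s r w₁ w₂ k v i) (pow_pos hβ k).le
end

section
/- Let C be a finite-dimensional unital C*-algebra with a faithful tracial state τ. Let A and B be unital C*-subalgebras of C such that ab = ba for all a ∈ A, b ∈ B. Let D_A ⊆ A and D_B ⊆ B be maximal abelian subalgebras of A and B respectively, and let D := D_A ∨ D_B be the subalgebra generated by D_A and D_B; assume D is a maximal abelian subalgebra of A ∨ B. Let E_D : A ∨ B → D, E_{D_A} : A ∨ B → D_A, and E_{D_B} : A ∨ B → D_B be the τ-preserving conditional expectations. Then E_D(ab) = E_{D_A}(a) E_{D_B}(b) for all a ∈ A, b ∈ B. -/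
open ComplexOrder

open Pointwise

set_option linter.unusedSectionVars false

section Aux

variable {C : Type*} [NormedRing C] [StarRing C] [CStarRing C] [CompleteSpace C]
    [NormedAlgebra ℂ C] [StarModule ℂ C] [FiniteDimensional ℂ C]

private lemma tau_uniq0 (τ : C →ₗ[ℂ] ℂ)
    (hτtr : ∀ x y : C, τ (x * y) = τ (y * x))
    (hτfaith : ∀ x : C, τ (star x * x) = 0 → x = 0)
    (S : StarSubalgebra ℂ C) {w : C} (hw : w ∈ S)
    (h : ∀ d ∈ S, τ (w * d) = 0) : w = 0 := by
  have h1 := h (star w) (star_mem hw)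
  rw [hτtr] at h1
  exact hτfaith w h1

private lemma tau_uniq (τ : C →ₗ[ℂ] ℂ)
    (hτtr : ∀ x y : C, τ (x * y) = τ (y * x))
    (hτfaith : ∀ x : C, τ (star x * x) = 0 → x = 0)
    (S : StarSubalgebra ℂ C) {u v : C} (hu : u ∈ S) (hv : v ∈ S)
    (h : ∀ d ∈ S, τ (u * d) = τ (v * d)) : u = v := by
  have h0 : u - v = 0 := tau_uniq0 τ hτtr hτfaith S (sub_mem hu hv) (fun d hd => by
    rw [sub_mul, map_sub, h d hd, sub_self])
  exact sub_eq_zero.mp h0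

private lemma sa_mem (A DA : StarSubalgebra ℂ C) (hDA : DA ≤ A)
    (hDAab : ∀ a ∈ DA, ∀ b ∈ DA, a * b = b * a)
    (hDAmax : ∀ S : StarSubalgebra ℂ C, S ≤ A → DA ≤ S →
      (∀ a ∈ S, ∀ b ∈ S, a * b = b * a) → S = DA)
    {y : C} (hyA : y ∈ A) (hysa : star y = y)
    (hyc : ∀ d ∈ DA, d * y = y * d) : y ∈ DA := by
  set G : Set C := (DA : Set C) ∪ {y} with hG
  have hGstar : ∀ g ∈ G, star g ∈ G := by
    rintro g (hg | rfl)
    · exact Or.inl (star_mem hg)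
    · exact Or.inr (by simp [hysa])
  have hgen : ∀ a ∈ G, ∀ b ∈ G, a * b = b * a := by
    rintro a (ha | rfl) b (hb | rfl)
    · exact hDAab a ha b hb
    · exact hyc a ha
    · exact (hyc b hb).symm
    · rfl
  have hgenstar : ∀ a ∈ G, ∀ b ∈ G, a * star b = star b * a :=
    fun a ha b hb => hgen a ha (star b) (hGstar b hb)
  letI hcommS := StarAlgebra.adjoinCommSemiringOfComm ℂ hgen hgenstar
  have hSA : StarAlgebra.adjoin ℂ G ≤ A := StarAlgebra.adjoin_le (by
    rintro g (hg | rfl)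
    · exact hDA hg
    · exact hyA)
  have hDAS : DA ≤ StarAlgebra.adjoin ℂ G :=
    fun d hd => StarAlgebra.subset_adjoin ℂ G (Or.inl hd)
  have hScomm : ∀ a ∈ StarAlgebra.adjoin ℂ G, ∀ b ∈ StarAlgebra.adjoin ℂ G,
      a * b = b * a := by
    intro a ha b hb
    have h := mul_comm (⟨a, ha⟩ : StarAlgebra.adjoin ℂ G) ⟨b, hb⟩
    simpa using congrArg Subtype.val h
  have hfin := hDAmax _ hSA hDAS hScomm
  rw [← hfin]
  exact StarAlgebra.subset_adjoin ℂ G (Or.inr rfl)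

/-- Decomposition of `A` as `DA + span of commutators [A, DA]`. -/
private lemma decomp (τ : C →ₗ[ℂ] ℂ)
    (hτtr : ∀ x y : C, τ (x * y) = τ (y * x))
    (hτfaith : ∀ x : C, τ (star x * x) = 0 → x = 0)
    (A DA : StarSubalgebra ℂ C) (hDA : DA ≤ A)
    (hDAab : ∀ a ∈ DA, ∀ b ∈ DA, a * b = b * a)
    (hDAmax : ∀ S : StarSubalgebra ℂ C, S ≤ A → DA ≤ S →
      (∀ a ∈ S, ∀ b ∈ S, a * b = b * a) → S = DA) :
    Subalgebra.toSubmodule A.toSubalgebra ≤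
      Subalgebra.toSubmodule DA.toSubalgebra ⊔
        Submodule.span ℂ {x : C | ∃ c ∈ A, ∃ d ∈ DA, x = c * d - d * c} := by
  classical
  set W : Submodule ℂ C := Submodule.span ℂ {x : C | ∃ c ∈ A, ∃ d ∈ DA, x = c * d - d * c}
    with hWdef
  set W' : Submodule ℂ C := Subalgebra.toSubmodule DA.toSubalgebra ⊔ W with hW'def
  intro x hx
  by_contra hx0
  have hxA : x ∈ A := hx
  -- a functional vanishing on `W'` but not at `x`
  have hmkx : (W'.mkQ x : C ⧸ W') ≠ 0 := fun h =>
    hx0 ((Submodule.Quotient.mk_eq_zero _).mp (by rwa [Submodule.mkQ_apply] at h))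
  obtain ⟨g, hg⟩ : ∃ g : Module.Dual ℂ (C ⧸ W'), g (W'.mkQ x) ≠ 0 := by
    by_contra hng
    push_neg at hng
    exact hmkx ((Module.forall_dual_apply_eq_zero_iff ℂ _).mp hng)
  set f : C →ₗ[ℂ] ℂ := g ∘ₗ W'.mkQ with hf
  have hfW' : ∀ u ∈ W', f u = 0 := by
    intro u hu
    have h0 : W'.mkQ u = 0 := by
      rw [Submodule.mkQ_apply]; exact (Submodule.Quotient.mk_eq_zero _).mpr hu
    simp [hf, h0]
  have hfx : f x ≠ 0 := hg
  -- represent `f` on `A` as `τ (z * ·)` with `z ∈ A`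
  set V : Submodule ℂ C := Subalgebra.toSubmodule A.toSubalgebra with hV
  have hVA : ∀ {u : C}, u ∈ V ↔ u ∈ A := fun {u} => Iff.rfl
  set Ψ : V →ₗ[ℂ] Module.Dual ℂ V := LinearMap.mk₂ ℂ (fun z u : V => τ ((z : C) * (u : C)))
    (fun m n u => by simp [add_mul])
    (fun c m u => by simp [smul_mul_assoc])
    (fun m u v => by simp [mul_add])
    (fun c m u => by simp [mul_smul_comm]) with hΨ
  have hΨinj : Function.Injective Ψ := by
    rw [← LinearMap.ker_eq_bot, Submodule.eq_bot_iff]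
    intro z hz
    have hz' : ∀ u : V, τ ((z : C) * (u : C)) = 0 := fun u => LinearMap.congr_fun hz u
    have h1 := hz' ⟨star (z : C), hVA.mpr (star_mem (hVA.mp z.2))⟩
    have h2 : τ (star (star (z : C)) * star (z : C)) = 0 := by rwa [star_star]
    have h3 : star (z : C) = 0 := hτfaith _ h2
    have h4 : (z : C) = 0 := by
      have := congrArg star h3
      rwa [star_star, star_zero] at this
    exact Subtype.ext h4
  have hdim : Module.finrank ℂ V = Module.finrank ℂ (Module.Dual ℂ V) :=
    (Subspace.dual_finrank_eq).symm
  have hΨsurj := (LinearMap.injective_iff_surjective_of_finrank_eq_finrank hdim).mp hΨinj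
  obtain ⟨z, hz⟩ := hΨsurj (f ∘ₗ V.subtype)
  have hzf : ∀ u : C, u ∈ A → τ ((z : C) * u) = f u := by
    intro u hu
    exact LinearMap.congr_fun hz (⟨u, hu⟩ : V)
  have hzA : (z : C) ∈ A := hVA.mp z.2
  -- z commutes with DA
  have hzc : ∀ d ∈ DA, d * (z : C) = (z : C) * d := by
    intro d hd
    set w : C := d * (z : C) - (z : C) * d with hw
    have hwA : w ∈ A := sub_mem (mul_mem (hDA hd) hzA) (mul_mem hzA (hDA hd))
    have hwc : ∀ c ∈ A, τ (w * c) = 0 := by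
      intro c hc
      have e1 : τ ((d * (z : C)) * c) = f (c * d) := by
        rw [mul_assoc, hτtr d ((z : C) * c), mul_assoc]
        exact hzf (c * d) (mul_mem hc (hDA hd))
      have e2 : τ (((z : C) * d) * c) = f (d * c) := by
        rw [mul_assoc]
        exact hzf (d * c) (mul_mem (hDA hd) hc)
      have e3 : c * d - d * c ∈ W' := Submodule.mem_sup_right (Submodule.subset_span ⟨c, hc, d, hd, rfl⟩)
      rw [hw, sub_mul, map_sub, e1, e2, ← map_sub, hfW' _ e3]
    have hwstar : τ (w * star w) = 0 := hwc (star w) (star_mem hwA)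
    have : star w = 0 := hτfaith (star w) (by rwa [star_star])
    have hw0 : w = 0 := by
      have := congrArg star this
      rwa [star_star, star_zero] at this
    exact sub_eq_zero.mp hw0
  have hzcs : ∀ d ∈ DA, d * star (z : C) = star (z : C) * d := by
    intro d hd
    have h1 := congrArg star (hzc (star d) (star_mem hd))
    simp only [star_mul, star_star] at h1
    exact h1.symm
  -- z ∈ DA via self-adjoint parts
  set h1 : C := (2⁻¹ : ℂ) • ((z : C) + star (z : C)) with hh1
  set k1 : C := (Complex.I * 2⁻¹ : ℂ) • (star (z : C) - (z : C)) with hk1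
  have hh1A : h1 ∈ A := SMulMemClass.smul_mem _ (add_mem hzA (star_mem hzA))
  have hk1A : k1 ∈ A := SMulMemClass.smul_mem _ (sub_mem (star_mem hzA) hzA)
  have hh1sa : star h1 = h1 := by
    simp [hh1, star_smul, star_add, star_star, add_comm]
  have hk1sa : star k1 = k1 := by
    simp only [hk1, star_smul, star_sub, star_star]
    rw [show star (Complex.I * (2⁻¹ : ℂ)) = -(Complex.I * 2⁻¹) by
        rw [Complex.star_def, map_mul, Complex.conj_I, map_inv₀, map_ofNat]; ring,
      neg_smul, ← smul_neg, neg_sub]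
  have hh1c : ∀ d ∈ DA, d * h1 = h1 * d := by
    intro d hd
    rw [hh1, mul_smul_comm, smul_mul_assoc, mul_add, add_mul, hzc d hd, hzcs d hd]
  have hk1c : ∀ d ∈ DA, d * k1 = k1 * d := by
    intro d hd
    rw [hk1, mul_smul_comm, smul_mul_assoc, mul_sub, sub_mul, hzc d hd, hzcs d hd]
  have hh1DA : h1 ∈ DA := sa_mem A DA hDA hDAab hDAmax hh1A hh1sa hh1c
  have hk1DA : k1 ∈ DA := sa_mem A DA hDA hDAab hDAmax hk1A hk1sa hk1c
  have hzDA : (z : C) ∈ DA := by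
    have hzeq : (z : C) = h1 + Complex.I • k1 := by
      rw [hh1, hk1, smul_smul]
      match_scalars <;> simp [Complex.ext_iff] <;> ring
    rw [hzeq]
    exact add_mem hh1DA (SMulMemClass.smul_mem _ hk1DA)
  -- hence z = 0, contradiction
  have hszDA : star (z : C) ∈ DA := star_mem hzDA
  have hstarzW' : star (z : C) ∈ W' :=
    Submodule.mem_sup_left ((Subalgebra.mem_toSubmodule _).mpr
      (StarSubalgebra.mem_toSubalgebra.mpr hszDA))
  have hz0 : τ ((z : C) * star (z : C)) = 0 := by
    rw [hzf (star (z : C)) (star_mem hzA), hfW' _ hstarzW']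
  have : star (z : C) = 0 := hτfaith _ (by rwa [star_star])
  have hzz : (z : C) = 0 := by
    have := congrArg star this
    rwa [star_star, star_zero] at this
  apply hfx
  rw [← hzf x hxA, hzz, zero_mul, map_zero]

/-- `E d = d` for `d ∈ DA`, derived from the defining properties. -/
private lemma exp_id (τ : C →ₗ[ℂ] ℂ)
    (hτtr : ∀ x y : C, τ (x * y) = τ (y * x))
    (hτfaith : ∀ x : C, τ (star x * x) = 0 → x = 0)
    (A DA : StarSubalgebra ℂ C) (hDA : DA ≤ A)
    (E : C →ₗ[ℂ] C) (hEmem : ∀ x ∈ A, E x ∈ DA)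
    (hEτ : ∀ x ∈ A, ∀ d ∈ DA, τ (E x * d) = τ (x * d))
    {d : C} (hd : d ∈ DA) : E d = d :=
  tau_uniq τ hτtr hτfaith DA (hEmem d (hDA hd)) hd (fun e he => hEτ d (hDA hd) e he)

/-- the bimodule property `E (x * d) = E x * d`. -/
private lemma exp_bimod (τ : C →ₗ[ℂ] ℂ)
    (hτtr : ∀ x y : C, τ (x * y) = τ (y * x))
    (hτfaith : ∀ x : C, τ (star x * x) = 0 → x = 0)
    (A DA : StarSubalgebra ℂ C) (hDA : DA ≤ A)
    (E : C →ₗ[ℂ] C) (hEmem : ∀ x ∈ A, E x ∈ DA)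
    (hEτ : ∀ x ∈ A, ∀ d ∈ DA, τ (E x * d) = τ (x * d))
    {x d : C} (hx : x ∈ A) (hd : d ∈ DA) : E (x * d) = E x * d := by
  have hxd : x * d ∈ A := mul_mem hx (hDA hd)
  refine tau_uniq τ hτtr hτfaith DA (hEmem _ hxd) (mul_mem (hEmem x hx) hd) (fun e he => ?_)
  rw [hEτ _ hxd e he, mul_assoc (E x) d e, hEτ x hx _ (mul_mem hd he), mul_assoc]

/-- Key lemma: if `b` commutes with all of `A`, then `τ (a * b) = τ (E a * b)`. -/
private lemma key (τ : C →ₗ[ℂ] ℂ)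
    (hτtr : ∀ x y : C, τ (x * y) = τ (y * x))
    (hτfaith : ∀ x : C, τ (star x * x) = 0 → x = 0)
    (A DA : StarSubalgebra ℂ C) (hDA : DA ≤ A)
    (hDAab : ∀ a ∈ DA, ∀ b ∈ DA, a * b = b * a)
    (hDAmax : ∀ S : StarSubalgebra ℂ C, S ≤ A → DA ≤ S →
      (∀ a ∈ S, ∀ b ∈ S, a * b = b * a) → S = DA)
    (E : C →ₗ[ℂ] C) (hEmem : ∀ x ∈ A, E x ∈ DA)
    (hEτ : ∀ x ∈ A, ∀ d ∈ DA, τ (E x * d) = τ (x * d))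
    {a b : C} (ha : a ∈ A) (hb : ∀ a' ∈ A, a' * b = b * a') :
    τ (a * b) = τ (E a * b) := by
  classical
  set W : Submodule ℂ C := Submodule.span ℂ {x : C | ∃ c ∈ A, ∃ d ∈ DA, x = c * d - d * c}
    with hWdef
  have hWA : ∀ w ∈ W, w ∈ A := by
    intro w hw
    have hle : W ≤ Subalgebra.toSubmodule A.toSubalgebra := by
      rw [hWdef, Submodule.span_le]
      rintro u ⟨c, hc, d, hd, rfl⟩
      exact (show c * d - d * c ∈ A from sub_mem (mul_mem hc (hDA hd)) (mul_mem (hDA hd) hc))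
    exact hle hw
  -- τ (w * e) = 0 for w ∈ W, e ∈ DA
  have hWDA : ∀ w ∈ W, ∀ e ∈ DA, τ (w * e) = 0 := by
    intro w hw e he
    induction hw using Submodule.span_induction with
    | mem u hu =>
      obtain ⟨c, hc, d, hd, rfl⟩ := hu
      have h1 : τ ((d * c) * e) = τ ((c * d) * e) := by
        rw [mul_assoc d c e, hτtr d (c * e), mul_assoc c e d, mul_assoc c d e, hDAab e he d hd]
      rw [sub_mul, map_sub, h1, sub_self]
    | zero => simp
    | add u v hu hv ihu ihv => rw [add_mul, map_add, ihu, ihv, add_zero]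
    | smul c u hu ih => rw [smul_mul_assoc, map_smul, ih, smul_zero]
  -- τ (w * b) = 0 for w ∈ W
  have hWb : ∀ w ∈ W, τ (w * b) = 0 := by
    intro w hw
    induction hw using Submodule.span_induction with
    | mem u hu =>
      obtain ⟨c, hc, d, hd, rfl⟩ := hu
      have h1 : τ ((d * c) * b) = τ ((c * d) * b) := by
        rw [mul_assoc d c b, hτtr d (c * b), mul_assoc c b d, ← hb d (hDA hd),
          ← mul_assoc c d b]
      rw [sub_mul, map_sub, h1, sub_self]
    | zero => simp
    | add u v hu hv ihu ihv => rw [add_mul, map_add, ihu, ihv, add_zero]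
    | smul c u hu ih => rw [smul_mul_assoc, map_smul, ih, smul_zero]
  -- decompose a
  have hmem := decomp τ hτtr hτfaith A DA hDA hDAab hDAmax
    (show a ∈ Subalgebra.toSubmodule A.toSubalgebra from ha)
  obtain ⟨dd, hdd, w, hw, hsum⟩ := Submodule.mem_sup.mp hmem
  have hddDA : dd ∈ DA := hdd
  have hEw : E w = 0 := by
    refine tau_uniq0 τ hτtr hτfaith DA (hEmem w (hWA w hw)) (fun e he => ?_)
    rw [hEτ w (hWA w hw) e he]
    exact hWDA w hw e he
  have hEa : E a = dd := by
    rw [← hsum, map_add, exp_id τ hτtr hτfaith A DA hDA E hEmem hEτ hddDA, hEw, add_zero]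
  rw [hEa, ← hsum, add_mul, map_add, hWb w hw, add_zero]

end Aux

/-- Let `C` be a finite-dimensional unital C*-algebra with a faithful
tracial state `τ`.  Let `A, B` be commuting unital C*-subalgebras, `D_A ⊆ A`, `D_B ⊆ B`
maximal abelian subalgebras such that `D := D_A ∨ D_B` is maximal abelian in `A ∨ B`.
If `E_D, E_{D_A}, E_{D_B}` are the `τ`-preserving conditional expectations of `A ∨ B`
onto `D`, `D_A`, `D_B`, then `E_D (a b) = E_{D_A} a * E_{D_B} b` for `a ∈ A`, `b ∈ B`. -/
theorem stmt4
    {C : Type*} [NormedRing C] [StarRing C] [CStarRing C] [CompleteSpace C]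
    [NormedAlgebra ℂ C] [StarModule ℂ C] [FiniteDimensional ℂ C]
    -- `τ` is a faithful tracial state on `C`:
    (τ : C →ₗ[ℂ] ℂ)
    (hτ1 : τ 1 = 1)
    (hτpos : ∀ x : C, 0 ≤ τ (star x * x))
    (hτtr : ∀ x y : C, τ (x * y) = τ (y * x))
    (hτfaith : ∀ x : C, τ (star x * x) = 0 → x = 0)
    -- `A` and `B` are commuting unital C*-subalgebras of `C`:
    (A B : StarSubalgebra ℂ C)
    (hcomm : ∀ a ∈ A, ∀ b ∈ B, a * b = b * a)
    -- `D_A` is a maximal abelian subalgebra of `A`: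
    (DA : StarSubalgebra ℂ C) (hDA : DA ≤ A)
    (hDAab : ∀ a ∈ DA, ∀ b ∈ DA, a * b = b * a)
    (hDAmax : ∀ S : StarSubalgebra ℂ C, S ≤ A → DA ≤ S →
      (∀ a ∈ S, ∀ b ∈ S, a * b = b * a) → S = DA)
    -- `D_B` is a maximal abelian subalgebra of `B`:
    (DB : StarSubalgebra ℂ C) (hDB : DB ≤ B)
    (hDBab : ∀ a ∈ DB, ∀ b ∈ DB, a * b = b * a)
    (hDBmax : ∀ S : StarSubalgebra ℂ C, S ≤ B → DB ≤ S →
      (∀ a ∈ S, ∀ b ∈ S, a * b = b * a) → S = DB)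
    -- `D := D_A ∨ D_B` is a maximal abelian subalgebra of `A ∨ B`:
    (hDab : ∀ a ∈ DA ⊔ DB, ∀ b ∈ DA ⊔ DB, a * b = b * a)
    (hDmax : ∀ S : StarSubalgebra ℂ C, S ≤ A ⊔ B → DA ⊔ DB ≤ S →
      (∀ a ∈ S, ∀ b ∈ S, a * b = b * a) → S = DA ⊔ DB)
    -- `E_D` is the `τ`-preserving conditional expectation of `A ∨ B` onto `D`:
    (ED : C →ₗ[ℂ] C)
    (hEDmem : ∀ x ∈ A ⊔ B, ED x ∈ DA ⊔ DB)
    (hEDid : ∀ d ∈ DA ⊔ DB, ED d = d)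
    (hEDτ : ∀ x ∈ A ⊔ B, ∀ d ∈ DA ⊔ DB, τ (ED x * d) = τ (x * d))
    -- `E_{D_A}` is the `τ`-preserving conditional expectation of `A ∨ B` onto `D_A`:
    (EDA : C →ₗ[ℂ] C)
    (hEDAmem : ∀ x ∈ A ⊔ B, EDA x ∈ DA)
    (hEDAid : ∀ d ∈ DA, EDA d = d)
    (hEDAτ : ∀ x ∈ A ⊔ B, ∀ d ∈ DA, τ (EDA x * d) = τ (x * d))
    -- `E_{D_B}` is the `τ`-preserving conditional expectation of `A ∨ B` onto `D_B`:
    (EDB : C →ₗ[ℂ] C)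
    (hEDBmem : ∀ x ∈ A ⊔ B, EDB x ∈ DB)
    (hEDBid : ∀ d ∈ DB, EDB d = d)
    (hEDBτ : ∀ x ∈ A ⊔ B, ∀ d ∈ DB, τ (EDB x * d) = τ (x * d)) :
    ∀ a ∈ A, ∀ b ∈ B, ED (a * b) = EDA a * EDB b := by
  classical
  have hAsup : A ≤ A ⊔ B := le_sup_left
  have hBsup : B ≤ A ⊔ B := le_sup_right
  have hDAsup : DA ≤ DA ⊔ DB := le_sup_left
  have hDBsup : DB ≤ DA ⊔ DB := le_sup_right
  -- restricted expectation hypotheses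
  have hEDAmem' : ∀ x ∈ A, EDA x ∈ DA := fun x hx => hEDAmem x (hAsup hx)
  have hEDAτ' : ∀ x ∈ A, ∀ d ∈ DA, τ (EDA x * d) = τ (x * d) :=
    fun x hx => hEDAτ x (hAsup hx)
  have hEDBmem' : ∀ x ∈ B, EDB x ∈ DB := fun x hx => hEDBmem x (hBsup hx)
  have hEDBτ' : ∀ x ∈ B, ∀ d ∈ DB, τ (EDB x * d) = τ (x * d) :=
    fun x hx => hEDBτ x (hBsup hx)
  intro a ha b hb
  have haAB : a ∈ A ⊔ B := hAsup ha
  have hbAB : b ∈ A ⊔ B := hBsup hb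
  have habAB : a * b ∈ A ⊔ B := mul_mem haAB hbAB
  -- `DA ⊔ DB` is contained in the span of products
  set s : Set C := {x : C | ∃ p ∈ DA, ∃ q ∈ DB, x = p * q} with hs
  have hss : s * s ⊆ s := by
    rw [Set.mul_subset_iff]
    rintro x ⟨p, hp, q, hq, rfl⟩ y ⟨p', hp', q', hq', rfl⟩
    refine ⟨p * p', mul_mem hp hp', q * q', mul_mem hq hq', ?_⟩
    rw [mul_assoc p q (p' * q'), ← mul_assoc q p' q',
      ← hcomm p' (hDA hp') q (hDB hq), mul_assoc p' q q', ← mul_assoc p p' (q * q')]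
  have hmulmem : ∀ {x y : C}, x ∈ Submodule.span ℂ s → y ∈ Submodule.span ℂ s →
      x * y ∈ Submodule.span ℂ s := by
    intro x y hx hy
    have h2 : Submodule.span ℂ s * Submodule.span ℂ s ≤ Submodule.span ℂ s := by
      rw [Submodule.span_mul_span]
      exact Submodule.span_le.mpr (hss.trans Submodule.subset_span)
    exact h2 (Submodule.mul_mem_mul hx hy)
  have hone : (1 : C) ∈ s := ⟨1, one_mem DA, 1, one_mem DB, (one_mul 1).symm⟩
  have hstarmem : ∀ x ∈ Submodule.span ℂ s, star x ∈ Submodule.span ℂ s := by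
    intro x hx
    induction hx using Submodule.span_induction with
    | mem u hu =>
      obtain ⟨p, hp, q, hq, rfl⟩ := hu
      refine Submodule.subset_span ⟨star p, star_mem hp, star q, star_mem hq, ?_⟩
      rw [star_mul, hcomm (star p) (hDA (star_mem hp)) (star q) (hDB (star_mem hq))]
    | zero => rw [star_zero]; exact zero_mem _
    | add u v hu hv ihu ihv => rw [star_add]; exact add_mem ihu ihv
    | smul c u hu ih => rw [star_smul]; exact Submodule.smul_mem _ _ ih
  let S0 : Subalgebra ℂ C :=
    { carrier := (Submodule.span ℂ s : Set C)
      mul_mem' := fun hx hy => hmulmem hx hy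
      one_mem' := Submodule.subset_span hone
      add_mem' := fun hx hy => add_mem hx hy
      zero_mem' := zero_mem _
      algebraMap_mem' := fun c => by
        rw [Algebra.algebraMap_eq_smul_one]
        exact Submodule.smul_mem _ _ (Submodule.subset_span hone) }
  let S : StarSubalgebra ℂ C := { S0 with star_mem' := fun hx => hstarmem _ hx }
  have hDspan : ∀ d ∈ DA ⊔ DB, d ∈ Submodule.span ℂ s := by
    have hDAle : DA ≤ S := fun p hp =>
      Submodule.subset_span ⟨p, hp, 1, one_mem DB, (mul_one p).symm⟩
    have hDBle : DB ≤ S := fun q hq =>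
      Submodule.subset_span ⟨1, one_mem DA, q, hq, (one_mul q).symm⟩
    intro d hd
    exact sup_le hDAle hDBle hd
  -- the main claim: both sides pair equally against `DA ⊔ DB`
  have hXY : ∀ d ∈ DA ⊔ DB, τ (ED (a * b) * d) = τ ((EDA a * EDB b) * d) := by
    intro d hd
    have hd' := hDspan d hd
    clear hd
    induction hd' using Submodule.span_induction with
    | mem u hu =>
      obtain ⟨p, hp, q, hq, rfl⟩ := hu
      have hpA : p ∈ A := hDA hp
      have hqB : q ∈ B := hDB hq
      have hpqD : p * q ∈ DA ⊔ DB := mul_mem (hDAsup hp) (hDBsup hq)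
      have step0 : τ (ED (a * b) * (p * q)) = τ ((a * b) * (p * q)) :=
        hEDτ (a * b) habAB (p * q) hpqD
      have e1 : (a * b) * (p * q) = (a * p) * (b * q) := by
        rw [mul_assoc a b (p * q), ← mul_assoc b p q, ← hcomm p hpA b hb,
          mul_assoc p b q, ← mul_assoc a p (b * q)]
      have step1 : τ ((a * p) * (b * q)) = τ (EDA (a * p) * (b * q)) :=
        key τ hτtr hτfaith A DA hDA hDAab hDAmax EDA hEDAmem' hEDAτ'
          (mul_mem ha hpA) (fun a' ha' => hcomm a' ha' (b * q) (mul_mem hb hqB))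
      have step2 : EDA (a * p) = EDA a * p :=
        exp_bimod τ hτtr hτfaith A DA hDA EDA hEDAmem' hEDAτ' ha hp
      have hEDAaA : EDA a ∈ A := hDA (hEDAmem' a ha)
      have hEDAapA : EDA a * p ∈ A := mul_mem hEDAaA hpA
      have step3 : τ ((EDA a * p) * (b * q)) = τ ((b * q) * (EDA a * p)) := hτtr _ _
      have step4 : τ ((b * q) * (EDA a * p)) = τ (EDB (b * q) * (EDA a * p)) :=
        key τ hτtr hτfaith B DB hDB hDBab hDBmax EDB hEDBmem' hEDBτ'
          (mul_mem hb hqB) (fun b' hb' => (hcomm (EDA a * p) hEDAapA b' hb').symm)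
      have step5 : EDB (b * q) = EDB b * q :=
        exp_bimod τ hτtr hτfaith B DB hDB EDB hEDBmem' hEDBτ' hb hq
      have hEDBbB : EDB b ∈ B := hDB (hEDBmem' b hb)
      have e2 : (EDA a * p) * (EDB b * q) = (EDA a * EDB b) * (p * q) := by
        rw [mul_assoc (EDA a) p (EDB b * q), ← mul_assoc p (EDB b) q,
          hcomm p hpA (EDB b) hEDBbB, mul_assoc (EDB b) p q,
          ← mul_assoc (EDA a) (EDB b) (p * q)]
      calc τ (ED (a * b) * (p * q)) = τ ((a * b) * (p * q)) := step0
        _ = τ ((a * p) * (b * q)) := by rw [e1]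
        _ = τ (EDA (a * p) * (b * q)) := step1
        _ = τ ((EDA a * p) * (b * q)) := by rw [step2]
        _ = τ ((b * q) * (EDA a * p)) := step3
        _ = τ (EDB (b * q) * (EDA a * p)) := step4
        _ = τ ((EDB b * q) * (EDA a * p)) := by rw [step5]
        _ = τ ((EDA a * p) * (EDB b * q)) := hτtr _ _
        _ = τ ((EDA a * EDB b) * (p * q)) := by rw [e2]
    | zero => rw [mul_zero, map_zero, mul_zero, map_zero]
    | add u v hu hv ihu ihv => rw [mul_add, map_add, ihu, ihv, mul_add, map_add]
    | smul c u hu ih => rw [mul_smul_comm, map_smul, ih, mul_smul_comm, map_smul]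
  exact tau_uniq τ hτtr hτfaith (DA ⊔ DB) (hEDmem (a * b) habAB)
    (mul_mem (hDAsup (hEDAmem' a ha)) (hDBsup (hEDBmem' b hb))) hXY
end

section
/- Let A be an n × n nonnegative irreducible real matrix, and let (β, x) be a Perron–Frobenius pair for A. For a nonnegative nonzero column vector y, set λ(y, A) := max{ λ ≥ 0 : A y ≥ λ y entrywise }. Then β = max{ λ(y, A) : y ≥ 0, y ≠ 0, ‖y‖ = 1 }, i.e. λ(y, A) ≤ β for every nonnegative vector y with ‖y‖ = 1, and the value β is attained (for instance at the normalization of x). -/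
/-- Let `A` be an `n × n` nonnegative irreducible real matrix with
Perron–Frobenius pair `(β, x)`.  For a nonnegative nonzero vector `y`, set
`λ(y, A) := max {λ ≥ 0 | A y ≥ λ y}`.  Then `β` is the maximum of `λ(y, A)` over all
nonnegative vectors `y` of Euclidean norm `1` (the value `β` being attained). -/
theorem stmt5
    (n : ℕ) (hn : 0 < n) (A : Matrix (Fin n) (Fin n) ℝ)
    (hA : ∀ i j, 0 ≤ A i j)
    -- `A` is irreducible:
    (hirr : ∀ i j, ∃ k : ℕ, 0 < k ∧ 0 < (A ^ k) i j)
    -- `(β, x)` is a Perron–Frobenius pair for `A`: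
    (β : ℝ) (x : Fin n → ℝ) (hβ : 0 < β) (hx : ∀ i, 0 < x i)
    (hPF : ∀ i, ∑ j, A i j * x j = β * x i) :
    IsGreatest
      {t : ℝ | ∃ y : Fin n → ℝ, (∀ i, 0 ≤ y i) ∧ y ≠ 0 ∧
        Real.sqrt (∑ i, y i ^ 2) = 1 ∧
        sSup {l : ℝ | 0 ≤ l ∧ ∀ i, l * y i ≤ A.mulVec y i} = t} β := by
  have i0 : Fin n := ⟨0, hn⟩
  constructor
  · -- membership: use y = x / ‖x‖
    have hsum : 0 < ∑ i, x i ^ 2 :=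
      Finset.sum_pos (fun i _ => pow_pos (hx i) 2) ⟨i0, Finset.mem_univ _⟩
    set c := Real.sqrt (∑ i, x i ^ 2) with hc
    have hcpos : 0 < c := Real.sqrt_pos.mpr hsum
    have hcsq : c ^ 2 = ∑ i, x i ^ 2 := Real.sq_sqrt hsum.le
    have hy : ∀ i, (0:ℝ) < x i / c := fun i => div_pos (hx i) hcpos
    refine ⟨fun i => x i / c, fun i => (hy i).le, ?_, ?_, ?_⟩
    · intro h
      exact (hy i0).ne' (congrFun h i0)
    · have : ∑ i, (x i / c) ^ 2 = 1 := by
        simp only [div_pow, ← Finset.sum_div, ← hcsq]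
        exact div_self (by positivity)
      rw [this, Real.sqrt_one]
    · have hAy : ∀ i, A.mulVec (fun j => x j / c) i = β * (x i / c) := by
        intro i
        simp only [Matrix.mulVec, dotProduct, ← mul_div_assoc,
          ← Finset.sum_div, hPF i]
      have hgr : IsGreatest {l : ℝ | 0 ≤ l ∧ ∀ i, l * (x i / c) ≤
          A.mulVec (fun j => x j / c) i} β := by
        constructor
        · exact ⟨hβ.le, fun i => by rw [hAy i]⟩
        · rintro l ⟨-, hl⟩
          have := hl i0
          rw [hAy i0] at this
          exact le_of_mul_le_mul_right this (hy i0)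
      exact hgr.csSup_eq
  · -- upper bound
    rintro t ⟨y, hy0, hyne, -, rfl⟩
    apply Real.sSup_le _ hβ.le
    rintro l ⟨hl0, hl⟩
    -- take i maximizing y i / x i
    obtain ⟨i, -, hi⟩ := Finset.exists_max_image Finset.univ (fun i => y i / x i)
      ⟨i0, Finset.mem_univ _⟩
    set m := y i / x i with hm
    have hyx : ∀ j, y j ≤ m * x j := by
      intro j
      have h1 := hi j (Finset.mem_univ j)
      calc y j = (y j / x j) * x j := (div_mul_cancel₀ (y j) (hx j).ne').symm
        _ ≤ m * x j := mul_le_mul_of_nonneg_right h1 (hx j).le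
    have hmpos : 0 < m := by
      obtain ⟨j, hj⟩ : ∃ j, y j ≠ 0 := by
        by_contra h
        push_neg at h
        exact hyne (funext fun j => h j)
      have hyj : 0 < y j := lt_of_le_of_ne (hy0 j) (Ne.symm hj)
      exact lt_of_lt_of_le (div_pos hyj (hx j)) (hi j (Finset.mem_univ j))
    have hyi : y i = m * x i := (div_mul_cancel₀ (y i) (hx i).ne').symm
    have hyipos : 0 < y i := by rw [hyi]; exact mul_pos hmpos (hx i)
    have key : l * y i ≤ β * y i := by
      calc l * y i ≤ A.mulVec y i := hl i
        _ ≤ ∑ j, A i j * (m * x j) := by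
            simp only [Matrix.mulVec, dotProduct]
            exact Finset.sum_le_sum fun j _ =>
              mul_le_mul_of_nonneg_left (hyx j) (hA i j)
        _ = m * ∑ j, A i j * x j := by rw [Finset.mul_sum]; congr 1; ext j; ring
        _ = m * (β * x i) := by rw [hPF i]
        _ = β * y i := by rw [hyi]; ring
    exact le_of_mul_le_mul_right key hyipos
end

section
/- Let A be an n × n irreducible matrix with nonnegative integer entries, let (β, x) be a Perron–Frobenius pair for A, and fix indices (i₁, j₁) with A(i₁, j₁) ≥ 2. Define A₁ by A₁(i,j) = A(i,j) for (i,j) ≠ (i₁,j₁) and A₁(i₁,j₁) = 1. Then A₁ is irreducible, A₁(i,j) ≤ A(i,j) for all (i,j), and (Σ_{i,j} (A₁^k)(i,j)) / β^k → 0 as k → ∞. -/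
open Filter Matrix

private lemma stmt8_pow_nonneg {n : ℕ} {B : Matrix (Fin n) (Fin n) ℝ}
    (hB : ∀ i j, 0 ≤ B i j) : ∀ (k : ℕ) (i j : Fin n), 0 ≤ (B ^ k) i j := by
  intro k
  induction k with
  | zero =>
    intro i j
    rw [pow_zero, Matrix.one_apply]
    split_ifs <;> norm_num
  | succ k ih =>
    intro i j
    rw [pow_succ, Matrix.mul_apply]
    exact Finset.sum_nonneg fun l _ => mul_nonneg (ih i l) (hB l j)

private lemma stmt8_mulVec_mono {n : ℕ} {B : Matrix (Fin n) (Fin n) ℝ}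
    (hB : ∀ i j, 0 ≤ B i j) {u v : Fin n → ℝ} (h : ∀ j, u j ≤ v j) (i : Fin n) :
    (B *ᵥ u) i ≤ (B *ᵥ v) i := by
  simp only [Matrix.mulVec, dotProduct]
  exact Finset.sum_le_sum fun j _ => mul_le_mul_of_nonneg_left (h j) (hB i j)

private lemma stmt8_mulVec_const_mul {n : ℕ} (B : Matrix (Fin n) (Fin n) ℝ)
    (a : ℝ) (x : Fin n → ℝ) (i : Fin n) :
    (B *ᵥ fun j => a * x j) i = a * (B *ᵥ x) i := by
  simp only [Matrix.mulVec, dotProduct, Finset.mul_sum]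
  exact Finset.sum_congr rfl fun j _ => by ring

/-- Let `A` be an `n × n` irreducible matrix with nonnegative integer
entries, `(β, x)` a Perron–Frobenius pair for `A`, and `A (i₁, j₁) ≥ 2`.  Define `A₁` by
changing the `(i₁, j₁)` entry of `A` to `1`.  Then `A₁` is irreducible, `A₁ ≤ A`
entrywise, and `(∑_{i,j} (A₁ ^ k) i j) / β ^ k → 0` as `k → ∞`. -/
theorem stmt8
    (n : ℕ) (hn : 0 < n) (A : Matrix (Fin n) (Fin n) ℝ)
    -- `A` has nonnegative integer entries:
    (hint : ∀ i j, ∃ m : ℕ, A i j = (m : ℝ))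
    -- `A` is irreducible:
    (hirr : ∀ i j, ∃ k : ℕ, 0 < k ∧ 0 < (A ^ k) i j)
    -- `(β, x)` is a Perron–Frobenius pair for `A`:
    (β : ℝ) (x : Fin n → ℝ) (hβ : 0 < β) (hx : ∀ i, 0 < x i)
    (hPF : ∀ i, ∑ j, A i j * x j = β * x i)
    (i₁ j₁ : Fin n) (h2 : (2 : ℝ) ≤ A i₁ j₁)
    (A₁ : Matrix (Fin n) (Fin n) ℝ)
    (hA₁ : ∀ i j, A₁ i j = if i = i₁ ∧ j = j₁ then 1 else A i j) :
    (∀ i j, ∃ k : ℕ, 0 < k ∧ 0 < (A₁ ^ k) i j) ∧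
    (∀ i j, A₁ i j ≤ A i j) ∧
    Tendsto (fun k : ℕ => (∑ i, ∑ j, (A₁ ^ k) i j) / β ^ k) atTop (nhds 0) := by
  have hA0 : ∀ i j, 0 ≤ A i j := by
    intro i j
    obtain ⟨m, hm⟩ := hint i j
    rw [hm]; positivity
  have hA₁0 : ∀ i j, 0 ≤ A₁ i j := by
    intro i j
    rw [hA₁]
    split_ifs
    · norm_num
    · exact hA0 i j
  have hA₁pos : ∀ i j, 0 < A i j → 0 < A₁ i j := by
    intro i j h
    rw [hA₁]
    split_ifs
    · norm_num
    · exact h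
  have hle : ∀ i j, A₁ i j ≤ A i j := by
    intro i j
    rw [hA₁]
    split_ifs with h
    · obtain ⟨h1, h2'⟩ := h; subst h1; subst h2'; linarith
    · exact le_rfl
  -- positivity transfer of powers
  have key : ∀ (k : ℕ) (i j : Fin n), 0 < (A ^ k) i j → 0 < (A₁ ^ k) i j := by
    intro k
    induction k with
    | zero => intro i j h; simpa using h
    | succ k ih =>
      intro i j h
      rw [pow_succ, Matrix.mul_apply] at h
      have hex : ∃ l ∈ Finset.univ, (0 : ℝ) < (A ^ k) i l * A l j := by
        apply Finset.exists_lt_of_sum_lt (f := fun _ => (0 : ℝ))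
        simpa using h
      obtain ⟨l, -, hl⟩ := hex
      have h1 : 0 < (A ^ k) i l ∧ 0 < A l j := by
        rcases mul_pos_iff.mp hl with h' | h'
        · exact h'
        · exact absurd h'.2 (not_lt.mpr (hA0 l j))
      rw [pow_succ, Matrix.mul_apply]
      refine lt_of_lt_of_le (mul_pos (ih i l h1.1) (hA₁pos l j h1.2)) ?_
      exact Finset.single_le_sum
        (fun t _ => mul_nonneg (stmt8_pow_nonneg hA₁0 k i t) (hA₁0 t j))
        (Finset.mem_univ l)
  have irr₁ : ∀ i j, ∃ k : ℕ, 0 < k ∧ 0 < (A₁ ^ k) i j := by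
    intro i j
    obtain ⟨k, hk, h⟩ := hirr i j
    exact ⟨k, hk, key k i j h⟩
  refine ⟨irr₁, hle, ?_⟩
  -- A₁ x ≤ β x entrywise
  have L0 : ∀ j, (A₁ *ᵥ x) j ≤ β * x j := by
    intro j
    rw [← hPF j]
    simp only [Matrix.mulVec, dotProduct]
    exact Finset.sum_le_sum fun l _ => mul_le_mul_of_nonneg_right (hle j l) (hx l).le
  -- strict at i₁
  have hstrict : (A₁ *ᵥ x) i₁ < β * x i₁ := by
    rw [← hPF i₁]
    simp only [Matrix.mulVec, dotProduct]
    refine Finset.sum_lt_sum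
      (fun l _ => mul_le_mul_of_nonneg_right (hle i₁ l) (hx l).le) ⟨j₁, Finset.mem_univ _, ?_⟩
    have : A₁ i₁ j₁ = 1 := by rw [hA₁]; simp
    rw [this]
    have : (1 : ℝ) < A i₁ j₁ := by linarith
    exact mul_lt_mul_of_pos_right this (hx j₁)
  -- monotone bound : A₁^k x ≤ β^k x
  have L1 : ∀ (k : ℕ) (i : Fin n), (A₁ ^ k *ᵥ x) i ≤ β ^ k * x i := by
    intro k
    induction k with
    | zero => intro i; simp [Matrix.one_mulVec]
    | succ k ih =>
      intro i
      have h1 : (A₁ ^ (k + 1)) *ᵥ x = A₁ ^ k *ᵥ (A₁ *ᵥ x) := by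
        rw [Matrix.mulVec_mulVec, ← pow_succ]
      rw [h1]
      calc (A₁ ^ k *ᵥ (A₁ *ᵥ x)) i ≤ (A₁ ^ k *ᵥ fun j => β * x j) i :=
            stmt8_mulVec_mono (stmt8_pow_nonneg hA₁0 k) L0 i
        _ = β * (A₁ ^ k *ᵥ x) i := stmt8_mulVec_const_mul _ _ _ _
        _ ≤ β * (β ^ k * x i) := mul_le_mul_of_nonneg_left (ih i) hβ.le
        _ = β ^ (k + 1) * x i := by ring
  have hvx : ∀ (k : ℕ) (i : Fin n), 0 ≤ (A₁ ^ k *ᵥ x) i := by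
    intro k i
    simp only [Matrix.mulVec, dotProduct]
    exact Finset.sum_nonneg fun j _ => mul_nonneg (stmt8_pow_nonneg hA₁0 k i j) (hx j).le
  -- eventual strict bound at every coordinate
  have hm : ∀ i : Fin n, ∃ m : ℕ, 0 < m ∧ (A₁ ^ m *ᵥ x) i < β ^ m * x i := by
    intro i
    obtain ⟨k, hk, hpos⟩ := irr₁ i i₁
    refine ⟨k + 1, Nat.succ_pos _, ?_⟩
    have h1 : (A₁ ^ (k + 1)) *ᵥ x = A₁ ^ k *ᵥ (A₁ *ᵥ x) := by
      rw [Matrix.mulVec_mulVec, ← pow_succ]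
    rw [h1]
    calc (A₁ ^ k *ᵥ (A₁ *ᵥ x)) i < (A₁ ^ k *ᵥ fun j => β * x j) i := by
          simp only [Matrix.mulVec, dotProduct]
          refine Finset.sum_lt_sum
            (fun l _ => mul_le_mul_of_nonneg_left (L0 l) (stmt8_pow_nonneg hA₁0 k i l))
            ⟨i₁, Finset.mem_univ _, mul_lt_mul_of_pos_left hstrict hpos⟩
      _ = β * (A₁ ^ k *ᵥ x) i := stmt8_mulVec_const_mul _ _ _ _
      _ ≤ β * (β ^ k * x i) := mul_le_mul_of_nonneg_left (L1 k i) hβ.le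
      _ = β ^ (k + 1) * x i := by ring
  choose m hm0 hmlt using hm
  have hne : (Finset.univ : Finset (Fin n)).Nonempty := ⟨⟨0, hn⟩, Finset.mem_univ _⟩
  set M : ℕ := Finset.univ.sup m with hMdef
  have hMi : ∀ i, m i ≤ M := fun i => Finset.le_sup (Finset.mem_univ i)
  have hM : 0 < M := lt_of_lt_of_le (hm0 ⟨0, hn⟩) (hMi ⟨0, hn⟩)
  set c : ℝ := Finset.univ.sup' hne (fun i => (A₁ ^ m i *ᵥ x) i / (β ^ m i * x i)) with hcdef
  have hci : ∀ i, (A₁ ^ m i *ᵥ x) i / (β ^ m i * x i) ≤ c := by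
    intro i
    have : (fun i => (A₁ ^ m i *ᵥ x) i / (β ^ m i * x i)) i ≤
        Finset.univ.sup' hne (fun i => (A₁ ^ m i *ᵥ x) i / (β ^ m i * x i)) :=
      Finset.le_sup' (fun i => (A₁ ^ m i *ᵥ x) i / (β ^ m i * x i)) (Finset.mem_univ i)
    exact this
  have hdenpos : ∀ i, (0:ℝ) < β ^ m i * x i := fun i => mul_pos (pow_pos hβ _) (hx i)
  have hc1 : c < 1 := by
    rw [hcdef, Finset.sup'_lt_iff]
    intro i _
    exact (div_lt_one (hdenpos i)).mpr (hmlt i)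
  have hc0 : 0 ≤ c := by
    refine le_trans ?_ (hci ⟨0, hn⟩)
    exact div_nonneg (hvx _ _) (hdenpos _).le
  have hcbound : ∀ i, (A₁ ^ m i *ᵥ x) i ≤ c * (β ^ m i * x i) := by
    intro i
    rw [← div_le_iff₀ (hdenpos i)] at *
    exact hci i
  -- bound at exponent M
  have hcM : ∀ i, (A₁ ^ M *ᵥ x) i ≤ c * (β ^ M * x i) := by
    intro i
    have hsplit : M = m i + (M - m i) := (Nat.add_sub_cancel' (hMi i)).symm
    have h1 : (A₁ ^ M) *ᵥ x = A₁ ^ m i *ᵥ (A₁ ^ (M - m i) *ᵥ x) := by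
      rw [Matrix.mulVec_mulVec, ← pow_add, ← hsplit]
    rw [h1]
    calc (A₁ ^ m i *ᵥ (A₁ ^ (M - m i) *ᵥ x)) i
        ≤ (A₁ ^ m i *ᵥ fun j => β ^ (M - m i) * x j) i :=
          stmt8_mulVec_mono (stmt8_pow_nonneg hA₁0 _) (L1 _) i
      _ = β ^ (M - m i) * (A₁ ^ m i *ᵥ x) i := stmt8_mulVec_const_mul _ _ _ _
      _ ≤ β ^ (M - m i) * (c * (β ^ m i * x i)) :=
          mul_le_mul_of_nonneg_left (hcbound i) (pow_pos hβ _).le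
      _ = c * (β ^ (m i + (M - m i)) * x i) := by rw [pow_add]; ring
      _ = c * (β ^ M * x i) := by rw [← hsplit]
  -- iterate
  have hiter : ∀ (k : ℕ) (i : Fin n), (A₁ ^ (k * M) *ᵥ x) i ≤ c ^ k * (β ^ (k * M) * x i) := by
    intro k
    induction k with
    | zero => intro i; simp [Matrix.one_mulVec]
    | succ k ih =>
      intro i
      have h1 : (A₁ ^ ((k + 1) * M)) *ᵥ x = A₁ ^ M *ᵥ (A₁ ^ (k * M) *ᵥ x) := by
        rw [Matrix.mulVec_mulVec, ← pow_add]
        ring_nf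
      rw [h1]
      calc (A₁ ^ M *ᵥ (A₁ ^ (k * M) *ᵥ x)) i
          ≤ (A₁ ^ M *ᵥ fun j => c ^ k * (β ^ (k * M) * x j)) i := by
            refine stmt8_mulVec_mono (stmt8_pow_nonneg hA₁0 _) (fun j => ?_) i
            exact ih j
        _ = c ^ k * β ^ (k * M) * (A₁ ^ M *ᵥ x) i := by
            have := stmt8_mulVec_const_mul (A₁ ^ M) (c ^ k * β ^ (k * M)) x i
            rw [← this]
            congr 1
            funext j
            ring
        _ ≤ c ^ k * β ^ (k * M) * (c * (β ^ M * x i)) := by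
            refine mul_le_mul_of_nonneg_left (hcM i) ?_
            positivity
        _ = c ^ (k + 1) * (β ^ ((k + 1) * M) * x i) := by
            rw [pow_succ]
            rw [show (k + 1) * M = k * M + M by ring, pow_add]
            ring
  -- general exponent
  have hall : ∀ (k : ℕ) (i : Fin n), (A₁ ^ k *ᵥ x) i ≤ c ^ (k / M) * (β ^ k * x i) := by
    intro k i
    have hsplit : (k / M) * M + k % M = k := by
      rw [mul_comm]; exact Nat.div_add_mod k M
    have h1 : (A₁ ^ k) *ᵥ x = A₁ ^ ((k / M) * M) *ᵥ (A₁ ^ (k % M) *ᵥ x) := by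
      rw [Matrix.mulVec_mulVec, ← pow_add, hsplit]
    rw [h1]
    calc (A₁ ^ ((k / M) * M) *ᵥ (A₁ ^ (k % M) *ᵥ x)) i
        ≤ (A₁ ^ ((k / M) * M) *ᵥ fun j => β ^ (k % M) * x j) i :=
          stmt8_mulVec_mono (stmt8_pow_nonneg hA₁0 _) (L1 _) i
      _ = β ^ (k % M) * (A₁ ^ ((k / M) * M) *ᵥ x) i := stmt8_mulVec_const_mul _ _ _ _
      _ ≤ β ^ (k % M) * (c ^ (k / M) * (β ^ ((k / M) * M) * x i)) :=
          mul_le_mul_of_nonneg_left (hiter _ i) (pow_pos hβ _).le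
      _ = c ^ (k / M) * (β ^ ((k / M) * M + k % M) * x i) := by rw [pow_add]; ring
      _ = c ^ (k / M) * (β ^ k * x i) := by rw [hsplit]
  -- sum bound
  set xmin : ℝ := Finset.univ.inf' hne x with hxmin
  have hxminpos : 0 < xmin := by
    rw [hxmin, Finset.lt_inf'_iff]
    exact fun i _ => hx i
  have hxminle : ∀ j, xmin ≤ x j := fun j => Finset.inf'_le _ (Finset.mem_univ j)
  set C : ℝ := (∑ i, x i) / xmin with hC
  have hsum : ∀ k : ℕ, (∑ i, ∑ j, (A₁ ^ k) i j) ≤ C * c ^ (k / M) * β ^ k := by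
    intro k
    have hrow : ∀ i, (∑ j, (A₁ ^ k) i j) * xmin ≤ (A₁ ^ k *ᵥ x) i := by
      intro i
      rw [Finset.sum_mul]
      simp only [Matrix.mulVec, dotProduct]
      exact Finset.sum_le_sum fun j _ =>
        mul_le_mul_of_nonneg_left (hxminle j) (stmt8_pow_nonneg hA₁0 k i j)
    have h1 : (∑ i, ∑ j, (A₁ ^ k) i j) * xmin ≤ ∑ i, c ^ (k / M) * (β ^ k * x i) := by
      rw [Finset.sum_mul]
      exact Finset.sum_le_sum fun i _ => le_trans (hrow i) (hall k i)
    have h2 : ∑ i, c ^ (k / M) * (β ^ k * x i) = c ^ (k / M) * β ^ k * ∑ i, x i := by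
      rw [Finset.mul_sum]
      exact Finset.sum_congr rfl fun i _ => by ring
    rw [h2] at h1
    rw [← le_div_iff₀ hxminpos] at h1
    calc (∑ i, ∑ j, (A₁ ^ k) i j) ≤ c ^ (k / M) * β ^ k * (∑ i, x i) / xmin := h1
      _ = C * c ^ (k / M) * β ^ k := by rw [hC]; ring
  -- finish by squeezing
  have hdiv : Tendsto (fun k : ℕ => k / M) atTop atTop := by
    refine tendsto_atTop_atTop.mpr fun b => ⟨b * M, fun a ha => ?_⟩
    exact (Nat.le_div_iff_mul_le hM).mpr ha
  have hg : Tendsto (fun k : ℕ => C * c ^ (k / M)) atTop (nhds 0) := by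
    have h1 : Tendsto (fun k : ℕ => c ^ (k / M)) atTop (nhds 0) :=
      (tendsto_pow_atTop_nhds_zero_of_lt_one hc0 hc1).comp hdiv
    simpa using h1.const_mul C
  refine squeeze_zero (fun k => ?_) (fun k => ?_) hg
  · apply div_nonneg _ (pow_pos hβ k).le
    exact Finset.sum_nonneg fun i _ => Finset.sum_nonneg fun j _ => stmt8_pow_nonneg hA₁0 k i j
  · rw [div_le_iff₀ (pow_pos hβ k)]
    calc (∑ i, ∑ j, (A₁ ^ k) i j) ≤ C * c ^ (k / M) * β ^ k := hsum k
      _ = C * c ^ (k / M) * β ^ k := rfl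
end

section
/- Let A and A₁ be n × n nonnegative irreducible real matrices such that A₁(i,j) ≤ A(i,j) for all (i,j) and A₁(i₁,j₁) < A(i₁,j₁) for some pair (i₁,j₁). Let (β, x) be a Perron–Frobenius pair for A and (β₁, x₁) a Perron–Frobenius pair for A₁. Then β₁ < β. -/
/-- Let `A` and `A₁` be `n × n` nonnegative irreducible real matrices
with `A₁ ≤ A` entrywise and `A₁ (i₁, j₁) < A (i₁, j₁)` for some pair `(i₁, j₁)`.  If
`(β, x)` is a Perron–Frobenius pair for `A` and `(β₁, x₁)` one for `A₁`, then
`β₁ < β`. -/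
theorem stmt9
    (n : ℕ) (hn : 0 < n) (A A₁ : Matrix (Fin n) (Fin n) ℝ)
    (hA : ∀ i j, 0 ≤ A i j) (hA₁ : ∀ i j, 0 ≤ A₁ i j)
    -- `A` and `A₁` are irreducible:
    (hirrA : ∀ i j, ∃ k : ℕ, 0 < k ∧ 0 < (A ^ k) i j)
    (hirrA₁ : ∀ i j, ∃ k : ℕ, 0 < k ∧ 0 < (A₁ ^ k) i j)
    (hle : ∀ i j, A₁ i j ≤ A i j)
    (i₁ j₁ : Fin n) (hlt : A₁ i₁ j₁ < A i₁ j₁)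
    -- `(β, x)` is a Perron–Frobenius pair for `A`:
    (β : ℝ) (x : Fin n → ℝ) (hβ : 0 < β) (hx : ∀ i, 0 < x i)
    (hPF : ∀ i, ∑ j, A i j * x j = β * x i)
    -- `(β₁, x₁)` is a Perron–Frobenius pair for `A₁`:
    (β₁ : ℝ) (x₁ : Fin n → ℝ) (hβ₁ : 0 < β₁) (hx₁ : ∀ i, 0 < x₁ i)
    (hPF₁ : ∀ i, ∑ j, A₁ i j * x₁ j = β₁ * x₁ i) :
    β₁ < β := by
  by_contra hcon
  push_neg at hcon
  -- pick `i₀` minimizing `x i / x₁ i`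
  obtain ⟨i₀, -, hi₀⟩ := Finset.exists_min_image Finset.univ (fun i => x i / x₁ i)
    ⟨⟨0, hn⟩, Finset.mem_univ _⟩
  set t : ℝ := x i₀ / x₁ i₀ with ht
  have htpos : 0 < t := div_pos (hx i₀) (hx₁ i₀)
  have hge : ∀ j, t * x₁ j ≤ x j := by
    intro j
    have h := hi₀ j (Finset.mem_univ j)
    have := (le_div_iff₀ (hx₁ j)).mp h
    linarith
  have hi₀eq : x i₀ = t * x₁ i₀ := by
    rw [ht, div_mul_cancel₀ _ (ne_of_gt (hx₁ i₀))]
  -- key lemma at points where x i = t * x₁ i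
  have key : ∀ i, x i = t * x₁ i →
      (∀ j, A i j ≠ 0 → x j = t * x₁ j) ∧ (∀ j, A i j = A₁ i j) := by
    intro i hi
    have e1 : ∑ j, A i j * (t * x₁ j) ≤ ∑ j, A i j * x j :=
      Finset.sum_le_sum fun j _ => mul_le_mul_of_nonneg_left (hge j) (hA i j)
    have e2 : ∑ j, A₁ i j * (t * x₁ j) ≤ ∑ j, A i j * (t * x₁ j) :=
      Finset.sum_le_sum fun j _ =>
        mul_le_mul_of_nonneg_right (hle i j) (le_of_lt (mul_pos htpos (hx₁ j)))
    have e3 : ∑ j, A₁ i j * (t * x₁ j) = t * (β₁ * x₁ i) := by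
      rw [← hPF₁ i, Finset.mul_sum]
      exact Finset.sum_congr rfl fun j _ => by ring
    have e4 : ∑ j, A i j * x j = β * (t * x₁ i) := by rw [hPF i, hi]
    have e5 : β * (t * x₁ i) ≤ t * (β₁ * x₁ i) := by
      nlinarith [mul_pos htpos (hx₁ i)]
    have hab : ∑ j, A i j * x j = ∑ j, A i j * (t * x₁ j) := by linarith
    have hcb : ∑ j, A₁ i j * (t * x₁ j) = ∑ j, A i j * (t * x₁ j) := by linarith
    constructor
    · intro j hAij
      have := ((Finset.sum_eq_sum_iff_of_le
        (fun j _ => mul_le_mul_of_nonneg_left (hge j) (hA i j))).mp hab.symm)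
        j (Finset.mem_univ j)
      exact (mul_left_cancel₀ hAij this).symm
    · intro j
      have := ((Finset.sum_eq_sum_iff_of_le
        (fun j _ => mul_le_mul_of_nonneg_right (hle i j)
          (le_of_lt (mul_pos htpos (hx₁ j))))).mp hcb) j (Finset.mem_univ j)
      exact (mul_right_cancel₀ (ne_of_gt (mul_pos htpos (hx₁ j))) this).symm
  -- propagation along positive entries of powers of A
  have prop : ∀ k : ℕ, ∀ i j, x i = t * x₁ i → 0 < (A ^ k) i j → x j = t * x₁ j := by
    intro k
    induction k with
    | zero =>
      intro i j hi hpos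
      rw [pow_zero, Matrix.one_apply] at hpos
      by_cases h : i = j
      · rwa [← h]
      · simp [h] at hpos
    | succ k ih =>
      intro i j hi hpos
      rw [pow_succ', Matrix.mul_apply] at hpos
      have : ∑ m : Fin n, (0 : ℝ) < ∑ m, A i m * (A ^ k) m j := by simpa using hpos
      obtain ⟨m, -, hm⟩ := Finset.exists_lt_of_sum_lt this
      have hAim : A i m ≠ 0 := by
        intro h0
        rw [h0, zero_mul] at hm
        exact lt_irrefl _ hm
      have hAimpos : 0 < A i m := lt_of_le_of_ne (hA i m) (Ne.symm hAim)
      have hpk : 0 < (A ^ k) m j := by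
        by_contra hnp
        push_neg at hnp
        nlinarith
      exact ih m j ((key i hi).1 m hAim) hpk
  obtain ⟨k, -, hk⟩ := hirrA i₀ i₁
  have hi₁ : x i₁ = t * x₁ i₁ := prop k i₀ i₁ hi₀eq hk
  have := (key i₁ hi₁).2 j₁
  linarith
end

section
/- Let A and A₁ be n × n nonnegative irreducible real matrices such that A₁(i,j) ≤ A(i,j) for all (i,j) and A₁(i₁,j₁) < A(i₁,j₁) for some pair (i₁,j₁). Then for every pair of indices (i,j) there exists a positive integer l such that (A₁^l)(i,j) < (A^l)(i,j). -/
lemma aux_pow_nonneg {n : ℕ} (A : Matrix (Fin n) (Fin n) ℝ)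
    (hA : ∀ i j, 0 ≤ A i j) (k : ℕ) : ∀ i j, 0 ≤ (A ^ k) i j := by
  induction k with
  | zero =>
    intro i j
    simp only [pow_zero, Matrix.one_apply]
    split <;> norm_num
  | succ k ih =>
    intro i j
    rw [pow_succ, Matrix.mul_apply]
    exact Finset.sum_nonneg fun p _ => mul_nonneg (ih i p) (hA p j)

lemma aux_mul_le {n : ℕ} (B B₁ C C₁ : Matrix (Fin n) (Fin n) ℝ)
    (hB₁ : ∀ i j, 0 ≤ B₁ i j) (hC₁ : ∀ i j, 0 ≤ C₁ i j)
    (hB : ∀ i j, B₁ i j ≤ B i j) (hC : ∀ i j, C₁ i j ≤ C i j) :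
    ∀ i j, (B₁ * C₁) i j ≤ (B * C) i j := by
  intro i j
  rw [Matrix.mul_apply, Matrix.mul_apply]
  exact Finset.sum_le_sum fun p _ =>
    mul_le_mul (hB i p) (hC p j) (hC₁ p j) ((hB₁ i p).trans (hB i p))

lemma aux_pow_le {n : ℕ} (A A₁ : Matrix (Fin n) (Fin n) ℝ)
    (hA₁ : ∀ i j, 0 ≤ A₁ i j) (hle : ∀ i j, A₁ i j ≤ A i j) (k : ℕ) :
    ∀ i j, (A₁ ^ k) i j ≤ (A ^ k) i j := by
  induction k with
  | zero => intro i j; simp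
  | succ k ih =>
    intro i j
    rw [pow_succ, pow_succ]
    exact aux_mul_le (A ^ k) (A₁ ^ k) A A₁ (aux_pow_nonneg A₁ hA₁ k) hA₁ ih hle i j

/-- Let `A` and `A₁` be `n × n` nonnegative irreducible real matrices
with `A₁ ≤ A` entrywise and `A₁ (i₁, j₁) < A (i₁, j₁)` for some pair `(i₁, j₁)`.  Then
for every pair of indices `(i, j)` there is a positive integer `l` with
`(A₁ ^ l) i j < (A ^ l) i j`. -/
theorem stmt10
    (n : ℕ) (hn : 0 < n) (A A₁ : Matrix (Fin n) (Fin n) ℝ)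
    (hA : ∀ i j, 0 ≤ A i j) (hA₁ : ∀ i j, 0 ≤ A₁ i j)
    -- `A` and `A₁` are irreducible:
    (hirrA : ∀ i j, ∃ k : ℕ, 0 < k ∧ 0 < (A ^ k) i j)
    (hirrA₁ : ∀ i j, ∃ k : ℕ, 0 < k ∧ 0 < (A₁ ^ k) i j)
    (hle : ∀ i j, A₁ i j ≤ A i j)
    (i₁ j₁ : Fin n) (hlt : A₁ i₁ j₁ < A i₁ j₁) :
    ∀ i j, ∃ l : ℕ, 0 < l ∧ (A₁ ^ l) i j < (A ^ l) i j := by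
  intro i j
  obtain ⟨k, hk, hkpos⟩ := hirrA₁ i i₁
  obtain ⟨m, hm, hmpos⟩ := hirrA₁ j₁ j
  refine ⟨k + 1 + m, by omega, ?_⟩
  have key : (A₁ ^ k * A₁ * A₁ ^ m) i j < (A₁ ^ k * A * A₁ ^ m) i j := by
    simp only [Matrix.mul_apply, Finset.sum_mul]
    refine Finset.sum_lt_sum (fun q _ => Finset.sum_le_sum fun p _ => ?_) ⟨j₁, Finset.mem_univ _, ?_⟩
    · exact mul_le_mul_of_nonneg_right
        (mul_le_mul_of_nonneg_left (hle p q) (aux_pow_nonneg A₁ hA₁ k i p))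
        (aux_pow_nonneg A₁ hA₁ m q j)
    · refine Finset.sum_lt_sum (fun p _ => ?_) ⟨i₁, Finset.mem_univ _, ?_⟩
      · exact mul_le_mul_of_nonneg_right
          (mul_le_mul_of_nonneg_left (hle p j₁) (aux_pow_nonneg A₁ hA₁ k i p))
          (aux_pow_nonneg A₁ hA₁ m j₁ j)
      · exact mul_lt_mul_of_pos_right (mul_lt_mul_of_pos_left hlt hkpos) hmpos
  have h1 : (A₁ ^ (k + 1 + m)) i j = (A₁ ^ k * A₁ * A₁ ^ m) i j := by
    rw [pow_add, pow_add, pow_one]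
  have h2 : (A₁ ^ k * A * A₁ ^ m) i j ≤ (A ^ (k + 1 + m)) i j := by
    rw [pow_add, pow_add, pow_one]
    refine aux_mul_le (A ^ k * A) (A₁ ^ k * A) (A ^ m) (A₁ ^ m) ?_ (aux_pow_nonneg A₁ hA₁ m)
      ?_ (aux_pow_le A A₁ hA₁ hle m) i j
    · intro a b
      rw [Matrix.mul_apply]
      exact Finset.sum_nonneg fun p _ => mul_nonneg (aux_pow_nonneg A₁ hA₁ k a p) (hA p b)
    · exact aux_mul_le (A ^ k) (A₁ ^ k) A A (aux_pow_nonneg A₁ hA₁ k) hA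
        (aux_pow_le A A₁ hA₁ hle k) (fun _ _ => le_refl _)
  rw [h1]
  exact key.trans_le h2
end
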